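/- Assume a = a(ρ) ∈ (0, 1] and that the deviation angle satisfies |α_c| < π(1/a − 2). Let f₀ be any positive Borel measure on I of total mass ρ > 0 and assume that for every θ ∈ I the characteristic t ↦ γ_t(θ) is a C¹ solution taking values in I. Then the solution f(t) = γ_t # f₀ of the mean-field equation satisfies ∫_I |θ − α_d| f(t)(dθ) = ∫_I |γ_t(θ) − α_d| f₀(dθ) → 0 as t → +∞; that is, f(t) converges to the aligned state ρδ_{α_d} (in first moment, hence in 1-Wasserstein distance). -/

import Mathlib

open MeasureTheory Real Filter
open scoped Real

/-- The angular collision-probability profile `𝒢(s) = (1/π)·min{s, 2π−s}`. -/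
noncomputable def Gfun (s : ℝ) : ℝ := (1 / π) * min s (2 * π - s)

/-!
Write `x_θ(t) = γ_t(θ) - α_d ∈ [-π, π]` and `J_θ(t)` for the interaction integral, which lies
in `[0, ρ]` and is `(ρ/π)`-Lipschitz in the position because `𝒢` is `(1/π)`-Lipschitz. These give
`d/dt (x_θ - x_φ)² ≤ -2λ (x_θ - x_φ)²` with `λ = ρ(π - a(2π + |α_c|))/π`, which is positive
exactly under the hypothesis on `α_c`, so all characteristics merge at rate `e^{-λt}`.
Since `𝒢(s) ≤ s/π`, this forces `J_θ(t) ≤ 2ρ e^{-λt}`, and then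
`d/dt x_θ² ≤ -λ x_θ² + C e^{-λt}` gives `x_θ(t)² ≤ (π² + Ct) e^{-λt}` uniformly in `θ`.
-/

open Set
open scoped Topology

theorem Gfun_eq (s : ℝ) : Gfun s = 1 - |s - π| / π := by
  have hπ := pi_pos.ne'
  unfold Gfun
  rcases le_total s π with h | h
  · rw [min_eq_left (by linarith), abs_of_nonpos (by linarith)]; field_simp; ring
  · rw [min_eq_right (by linarith), abs_of_nonneg (by linarith)]; field_simp; ring

theorem continuous_Gfun : Continuous Gfun := by
  unfold Gfun; fun_prop

theorem Gfun_le_one (s : ℝ) : Gfun s ≤ 1 := by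
  rw [Gfun_eq]
  have : 0 ≤ |s - π| / π := by positivity
  linarith

theorem Gfun_nonneg {s : ℝ} (h₀ : 0 ≤ s) (h₂ : s ≤ 2 * π) : 0 ≤ Gfun s := by
  rw [Gfun_eq, sub_nonneg, div_le_one pi_pos, abs_le]
  constructor <;> linarith

theorem Gfun_le_div_pi (s : ℝ) : Gfun s ≤ s / π := by
  unfold Gfun
  rw [one_div_mul_eq_div]
  gcongr
  exact min_le_left _ _

theorem abs_Gfun_sub_le (s u : ℝ) : |Gfun s - Gfun u| ≤ |s - u| / π := by
  rw [Gfun_eq, Gfun_eq, sub_sub_sub_cancel_left, ← sub_div, abs_div, abs_of_pos pi_pos]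
  refine div_le_div_of_nonneg_right ?_ pi_pos.le
  calc |(|u - π| - |s - π|)| ≤ |(u - π) - (s - π)| := abs_abs_sub_abs_le_abs_sub _ _
    _ = |s - u| := by rw [abs_sub_comm]; ring_nf

noncomputable def interactionIntegral (μ : Measure ℝ) (y : ℝ → ℝ) (x : ℝ) : ℝ :=
  ∫ φ, Gfun |x - y φ| ∂μ

section InteractionIntegral

variable {μ : Measure ℝ} {y : ℝ → ℝ} {x x' r : ℝ}

theorem integrable_Gfun_abs_sub [IsFiniteMeasure μ] (hy : Measurable y)
    (hxy : ∀ᵐ φ ∂μ, |x - y φ| ≤ 2 * π) : Integrable (fun φ => Gfun |x - y φ|) μ := by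
  refine (integrable_const (1 : ℝ)).mono'
    (continuous_Gfun.measurable.comp (measurable_const.sub hy).abs).aestronglyMeasurable ?_
  filter_upwards [hxy] with φ hφ
  rw [norm_eq_abs, abs_le]
  exact ⟨by linarith [Gfun_nonneg (abs_nonneg _) hφ], Gfun_le_one _⟩

theorem interactionIntegral_nonneg (hxy : ∀ᵐ φ ∂μ, |x - y φ| ≤ 2 * π) :
    0 ≤ interactionIntegral μ y x :=
  integral_nonneg_of_ae <| hxy.mono fun _ h => Gfun_nonneg (abs_nonneg _) h

theorem interactionIntegral_le_measureReal [IsFiniteMeasure μ]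
    (hxy : ∀ᵐ φ ∂μ, |x - y φ| ≤ 2 * π) : interactionIntegral μ y x ≤ μ.real univ := by
  have := integral_mono_of_nonneg (hxy.mono fun _ h => Gfun_nonneg (abs_nonneg _) h)
    (integrable_const (1 : ℝ)) (ae_of_all μ fun φ => Gfun_le_one |x - y φ|)
  simpa [interactionIntegral] using this

theorem interactionIntegral_le_of_ae_abs_sub_le [IsFiniteMeasure μ]
    (hxy : ∀ᵐ φ ∂μ, |x - y φ| ≤ 2 * π) (hr : ∀ᵐ φ ∂μ, |x - y φ| ≤ r) :
    interactionIntegral μ y x ≤ μ.real univ * r / π := by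
  have := integral_mono_of_nonneg (hxy.mono fun _ h => Gfun_nonneg (abs_nonneg _) h)
    (integrable_const (r / π))
    (hr.mono fun φ h => (Gfun_le_div_pi _).trans (div_le_div_of_nonneg_right h pi_pos.le))
  simpa [interactionIntegral, mul_div_assoc] using this

theorem abs_interactionIntegral_sub_le [IsFiniteMeasure μ] (hy : Measurable y)
    (hxy : ∀ᵐ φ ∂μ, |x - y φ| ≤ 2 * π) (hx'y : ∀ᵐ φ ∂μ, |x' - y φ| ≤ 2 * π) :
    |interactionIntegral μ y x - interactionIntegral μ y x'| ≤ μ.real univ / π * |x - x'| := by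
  unfold interactionIntegral
  rw [← integral_sub (integrable_Gfun_abs_sub hy hxy) (integrable_Gfun_abs_sub hy hx'y)]
  calc |∫ φ, (Gfun |x - y φ| - Gfun |x' - y φ|) ∂μ|
      ≤ ∫ _φ, |x - x'| / π ∂μ := by
        refine (abs_integral_le_integral_abs).trans (integral_mono_of_nonneg
          (ae_of_all μ fun _ => abs_nonneg _) (integrable_const _) (ae_of_all μ fun φ => ?_))
        refine (abs_Gfun_sub_le _ _).trans (div_le_div_of_nonneg_right ?_ pi_pos.le)
        calc |(|x - y φ| - |x' - y φ|)| ≤ |(x - y φ) - (x' - y φ)| := abs_abs_sub_abs_le_abs_sub _ _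
          _ = |x - x'| := by ring_nf
    _ = μ.real univ / π * |x - x'| := by rw [integral_const, smul_eq_mul]; ring

end InteractionIntegral

theorem le_add_mul_mul_exp_neg_of_hasDerivAt {u u' : ℝ → ℝ} {k C t : ℝ}
    (hu : ∀ s, 0 ≤ s → HasDerivAt u (u' s) s)
    (hu' : ∀ s, 0 < s → u' s ≤ -k * u s + C * exp (-k * s)) (ht : 0 ≤ t) :
    u t ≤ (u 0 + C * t) * exp (-k * t) := by
  -- the integrating factor `exp (k s)` turns the differential inequality into monotonicity
  set g : ℝ → ℝ := fun s => u s * exp (k * s) - C * s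
  have hg : ∀ s, 0 ≤ s → HasDerivAt g ((u' s + k * u s) * exp (k * s) - C) s := fun s hs => by
    refine (((hu s hs).mul ((hasDerivAt_id' s).const_mul k).exp).sub
      ((hasDerivAt_id' s).const_mul C)).congr_deriv ?_
    ring
  have hanti : AntitoneOn g (Ici 0) := by
    refine antitoneOn_of_hasDerivWithinAt_nonpos (convex_Ici 0)
      (fun s hs => (hg s hs).continuousAt.continuousWithinAt)
      (fun s hs => (hg s (interior_subset hs)).hasDerivWithinAt) fun s hs => ?_
    rw [interior_Ici] at hs
    have hexp : exp (-k * s) * exp (k * s) = 1 := by rw [← exp_add]; simp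
    have := mul_le_mul_of_nonneg_right (hu' s hs) (exp_pos (k * s)).le
    linear_combination this + C * hexp
  have := hanti self_mem_Ici ht ht
  have hexp : exp (k * t) * exp (-k * t) = 1 := by rw [← exp_add]; simp
  simp only [g, mul_zero, exp_zero, mul_one, sub_zero] at this
  have := mul_le_mul_of_nonneg_right this (exp_pos (-k * t)).le
  linear_combination this - u t * hexp

theorem tendsto_add_mul_mul_exp_neg_atTop {k : ℝ} (hk : 0 < k) (A C : ℝ) :
    Tendsto (fun t => (A + C * t) * exp (-k * t)) atTop (𝓝 0) := by
  have hexp : Tendsto (fun t => exp (-k * t)) atTop (𝓝 0) := by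
    refine (tendsto_exp_neg_atTop_nhds_zero.comp (tendsto_id.const_mul_atTop hk)).congr
      fun t => ?_
    simp [neg_mul]
  have hlin := tendsto_rpow_mul_exp_neg_mul_atTop_nhds_zero 1 k hk
  simp only [rpow_one] at hlin
  simpa [add_mul, mul_assoc] using (hexp.const_mul A).add (hlin.const_mul C)

-- `H[f](θ)` written in `x = θ - α_d`, with `J = ∫ 𝒢(|θ - φ|) f(dφ)`
noncomputable def alignDrift (ρ a αc x J : ℝ) : ℝ := -ρ * x + a * (x + αc) * J

noncomputable def alignmentRate (ρ a αc : ℝ) : ℝ := ρ * (π - a * (2 * π + |αc|)) / π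

section Drift

variable {ρ a αc x y J Jx Jy : ℝ}

theorem alignmentRate_pos (hρ : 0 < ρ) (ha : 0 < a) (hαc : |αc| < π * (1 / a - 2)) :
    0 < alignmentRate ρ a αc := by
  have h := mul_lt_mul_of_pos_left hαc ha
  rw [show a * (π * (1 / a - 2)) = π - 2 * a * π by field_simp] at h
  unfold alignmentRate
  have : 0 < π - a * (2 * π + |αc|) := by linarith
  positivity

theorem alignmentRate_le (hρ : 0 ≤ ρ) (ha : 0 ≤ a) : alignmentRate ρ a αc ≤ ρ := by
  unfold alignmentRate
  rw [div_le_iff₀ pi_pos]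
  have : 0 ≤ a * (2 * π + |αc|) := by positivity
  nlinarith

theorem sub_mul_alignDrift_sub_le (ha : 0 ≤ a) (hy : |y| ≤ π) (hJx : Jx ≤ ρ)
    (hJ : |Jx - Jy| ≤ ρ / π * |x - y|) :
    (x - y) * (alignDrift ρ a αc x Jx - alignDrift ρ a αc y Jy) ≤
      -alignmentRate ρ a αc * (x - y) ^ 2 := by
  set w := x - y
  have hcross : w * ((y + αc) * (Jx - Jy)) ≤ (π + |αc|) * (ρ / π) * w ^ 2 := calc
    w * ((y + αc) * (Jx - Jy)) ≤ |w| * (|y + αc| * |Jx - Jy|) := by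
        rw [← abs_mul, ← abs_mul]; exact le_abs_self _
    _ ≤ |w| * ((π + |αc|) * (ρ / π * |w|)) := by
        gcongr
        exact (abs_add_le _ _).trans (by linarith)
    _ = (π + |αc|) * (ρ / π) * w ^ 2 := by rw [← sq_abs w]; ring
  have hself : a * w ^ 2 * Jx ≤ a * w ^ 2 * ρ := by gcongr
  have hsplit : w * (alignDrift ρ a αc x Jx - alignDrift ρ a αc y Jy) =
      -ρ * w ^ 2 + a * w ^ 2 * Jx + a * (w * ((y + αc) * (Jx - Jy))) := by
    simp only [alignDrift, w]; ring
  have hrate : -ρ * w ^ 2 + a * w ^ 2 * ρ + a * ((π + |αc|) * (ρ / π) * w ^ 2) =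
      -alignmentRate ρ a αc * w ^ 2 := by
    unfold alignmentRate; field_simp; ring
  rw [hsplit, ← hrate]
  linarith [mul_le_mul_of_nonneg_left hcross ha]

theorem mul_alignDrift_le (ha : 0 ≤ a) (hx : |x| ≤ π) (hJ : 0 ≤ J) :
    x * alignDrift ρ a αc x J ≤ -ρ * x ^ 2 + a * π * (π + |αc|) * J := by
  have hprod : x * (x + αc) ≤ π * (π + |αc|) := calc
    x * (x + αc) ≤ |x| * |x + αc| := by rw [← abs_mul]; exact le_abs_self _
    _ ≤ π * (π + |αc|) := by gcongr; exact (abs_add_le _ _).trans (by linarith)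
  unfold alignDrift
  linear_combination mul_le_mul_of_nonneg_left (mul_le_mul_of_nonneg_right hprod hJ) ha

end Drift

structure IsAlignmentFlow (ρ a αd αc : ℝ) (μ : Measure ℝ) (γ : ℝ → ℝ → ℝ) : Prop where
  ae_mem : ∀ᵐ φ ∂μ, φ ∈ Ico (-π + αd) (π + αd)
  measureReal_univ : μ.real univ = ρ
  measurable : ∀ t, Measurable (γ t)
  mapsTo : ∀ θ ∈ Ico (-π + αd) (π + αd), ∀ t, 0 ≤ t → γ t θ ∈ Ico (-π + αd) (π + αd)
  hasDerivAt : ∀ θ ∈ Ico (-π + αd) (π + αd), ∀ t, 0 ≤ t →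
    HasDerivAt (fun s => γ s θ - αd)
      (alignDrift ρ a αc (γ t θ - αd) (interactionIntegral μ (γ t) (γ t θ))) t

namespace IsAlignmentFlow

variable {ρ a αd αc : ℝ} {μ : Measure ℝ} {γ : ℝ → ℝ → ℝ} {θ φ t : ℝ}

theorem abs_sub_le_pi (hγ : IsAlignmentFlow ρ a αd αc μ γ) (hθ : θ ∈ Ico (-π + αd) (π + αd))
    (ht : 0 ≤ t) : |γ t θ - αd| ≤ π := by
  obtain ⟨h₁, h₂⟩ := hγ.mapsTo θ hθ t ht
  rw [abs_le]; constructor <;> linarith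

theorem abs_sub_le_two_pi (hγ : IsAlignmentFlow ρ a αd αc μ γ)
    (hθ : θ ∈ Ico (-π + αd) (π + αd)) (hφ : φ ∈ Ico (-π + αd) (π + αd)) (ht : 0 ≤ t) :
    |γ t θ - γ t φ| ≤ 2 * π := by
  obtain ⟨h₁, h₂⟩ := hγ.mapsTo θ hθ t ht
  obtain ⟨h₃, h₄⟩ := hγ.mapsTo φ hφ t ht
  rw [abs_le]; constructor <;> linarith

theorem ae_abs_sub_le_two_pi (hγ : IsAlignmentFlow ρ a αd αc μ γ)
    (hθ : θ ∈ Ico (-π + αd) (π + αd)) (ht : 0 ≤ t) : ∀ᵐ φ ∂μ, |γ t θ - γ t φ| ≤ 2 * π :=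
  hγ.ae_mem.mono fun _ hφ => hγ.abs_sub_le_two_pi hθ hφ ht

theorem interactionIntegral_nonneg (hγ : IsAlignmentFlow ρ a αd αc μ γ)
    (hθ : θ ∈ Ico (-π + αd) (π + αd)) (ht : 0 ≤ t) :
    0 ≤ interactionIntegral μ (γ t) (γ t θ) :=
  _root_.interactionIntegral_nonneg (hγ.ae_abs_sub_le_two_pi hθ ht)

theorem interactionIntegral_le [IsFiniteMeasure μ] (hγ : IsAlignmentFlow ρ a αd αc μ γ)
    (hθ : θ ∈ Ico (-π + αd) (π + αd)) (ht : 0 ≤ t) :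
    interactionIntegral μ (γ t) (γ t θ) ≤ ρ :=
  hγ.measureReal_univ ▸ interactionIntegral_le_measureReal (hγ.ae_abs_sub_le_two_pi hθ ht)

theorem abs_interactionIntegral_sub_le [IsFiniteMeasure μ] (hγ : IsAlignmentFlow ρ a αd αc μ γ)
    (hθ : θ ∈ Ico (-π + αd) (π + αd)) (hφ : φ ∈ Ico (-π + αd) (π + αd)) (ht : 0 ≤ t) :
    |interactionIntegral μ (γ t) (γ t θ) - interactionIntegral μ (γ t) (γ t φ)| ≤
      ρ / π * |γ t θ - γ t φ| :=
  hγ.measureReal_univ ▸ _root_.abs_interactionIntegral_sub_le (hγ.measurable t)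
    (hγ.ae_abs_sub_le_two_pi hθ ht) (hγ.ae_abs_sub_le_two_pi hφ ht)

theorem abs_sub_le_exp [IsFiniteMeasure μ] (hγ : IsAlignmentFlow ρ a αd αc μ γ) (ha : 0 ≤ a)
    (hθ : θ ∈ Ico (-π + αd) (π + αd)) (hφ : φ ∈ Ico (-π + αd) (π + αd)) (ht : 0 ≤ t) :
    |γ t θ - γ t φ| ≤ 2 * π * exp (-alignmentRate ρ a αc * t) := by
  set x : ℝ → ℝ → ℝ := fun s ψ => γ s ψ - αd
  set J : ℝ → ℝ → ℝ := fun s ψ => interactionIntegral μ (γ s) (γ s ψ)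
  have hw : ∀ s, x s θ - x s φ = γ s θ - γ s φ := fun s => sub_sub_sub_cancel_right _ _ _
  have hsq : (x t θ - x t φ) ^ 2 ≤
      ((x 0 θ - x 0 φ) ^ 2 + 0 * t) * exp (-(2 * alignmentRate ρ a αc) * t) := by
    refine le_add_mul_mul_exp_neg_of_hasDerivAt (u := fun s => (x s θ - x s φ) ^ 2)
      (u' := fun s => 2 * (x s θ - x s φ) *
        (alignDrift ρ a αc (x s θ) (J s θ) - alignDrift ρ a αc (x s φ) (J s φ)))
      (fun s hs => ?_) (fun s hs => ?_) ht
    · refine (((hγ.hasDerivAt θ hθ s hs).sub (hγ.hasDerivAt φ hφ s hs)).pow 2).congr_deriv ?_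
      simp only [x, J, Pi.sub_apply]; ring
    · have := sub_mul_alignDrift_sub_le (αc := αc) (x := x s θ) (y := x s φ) ha
        (hγ.abs_sub_le_pi hφ hs.le)
        (hγ.interactionIntegral_le hθ hs.le)
        ((hγ.abs_interactionIntegral_sub_le hθ hφ hs.le).trans_eq (by rw [hw]))
      linarith
  have h₀ : (x 0 θ - x 0 φ) ^ 2 ≤ (2 * π) ^ 2 := by
    rw [← sq_abs, hw]; gcongr; exact hγ.abs_sub_le_two_pi hθ hφ le_rfl
  rw [← hw]
  refine abs_le_of_sq_le_sq (hsq.trans ?_) (by positivity)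
  calc ((x 0 θ - x 0 φ) ^ 2 + 0 * t) * exp (-(2 * alignmentRate ρ a αc) * t)
      ≤ (2 * π) ^ 2 * exp (-(2 * alignmentRate ρ a αc) * t) := by gcongr; simpa using h₀
    _ = (2 * π * exp (-alignmentRate ρ a αc * t)) ^ 2 := by
      rw [mul_pow (2 * π), ← exp_nat_mul]; ring_nf

theorem interactionIntegral_le_exp [IsFiniteMeasure μ] (hγ : IsAlignmentFlow ρ a αd αc μ γ)
    (ha : 0 ≤ a) (hθ : θ ∈ Ico (-π + αd) (π + αd)) (ht : 0 ≤ t) :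
    interactionIntegral μ (γ t) (γ t θ) ≤ 2 * ρ * exp (-alignmentRate ρ a αc * t) := by
  have := interactionIntegral_le_of_ae_abs_sub_le (hγ.ae_abs_sub_le_two_pi hθ ht)
    (hγ.ae_mem.mono fun φ hφ => hγ.abs_sub_le_exp ha hθ hφ ht)
  rw [hγ.measureReal_univ] at this
  exact this.trans_eq (by field_simp)

theorem sq_sub_le [IsFiniteMeasure μ] (hγ : IsAlignmentFlow ρ a αd αc μ γ) (ha : 0 ≤ a)
    (hθ : θ ∈ Ico (-π + αd) (π + αd)) (ht : 0 ≤ t) :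
    (γ t θ - αd) ^ 2 ≤
      (π ^ 2 + 4 * a * ρ * π * (π + |αc|) * t) * exp (-alignmentRate ρ a αc * t) := by
  have hρ : 0 ≤ ρ := hγ.measureReal_univ ▸ measureReal_nonneg
  set J := fun s => interactionIntegral μ (γ s) (γ s θ)
  have hsq : (γ t θ - αd) ^ 2 ≤ ((γ 0 θ - αd) ^ 2 + 4 * a * ρ * π * (π + |αc|) * t) *
      exp (-alignmentRate ρ a αc * t) := by
    refine le_add_mul_mul_exp_neg_of_hasDerivAt (u := fun s => (γ s θ - αd) ^ 2)
      (u' := fun s => 2 * (γ s θ - αd) * alignDrift ρ a αc (γ s θ - αd) (J s))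
      (fun s hs => ?_) (fun s hs => ?_) ht
    · refine ((hγ.hasDerivAt θ hθ s hs).pow 2).congr_deriv ?_
      simp only [J]; ring
    · have h₁ := mul_alignDrift_le (ρ := ρ) (αc := αc) ha (hγ.abs_sub_le_pi hθ hs.le)
        (hγ.interactionIntegral_nonneg hθ hs.le)
      have h₂ := mul_le_mul_of_nonneg_left (hγ.interactionIntegral_le_exp ha hθ hs.le)
        (by positivity : 0 ≤ a * π * (π + |αc|))
      have h₃ := mul_le_mul_of_nonneg_right (alignmentRate_le (αc := αc) hρ ha)
        (sq_nonneg (γ s θ - αd))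
      have h₄ := mul_nonneg hρ (sq_nonneg (γ s θ - αd))
      simp only [J] at h₁ ⊢
      linarith
  have h₀ : (γ 0 θ - αd) ^ 2 ≤ π ^ 2 := by
    rw [← sq_abs]; gcongr; exact hγ.abs_sub_le_pi hθ le_rfl
  exact hsq.trans (by gcongr)

theorem integral_abs_sub_le [IsFiniteMeasure μ] (hγ : IsAlignmentFlow ρ a αd αc μ γ)
    (ha : 0 ≤ a) (ht : 0 ≤ t) :
    ∫ θ, |γ t θ - αd| ∂μ ≤
      ρ * √((π ^ 2 + 4 * a * ρ * π * (π + |αc|) * t) * exp (-alignmentRate ρ a αc * t)) := by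
  have := integral_mono_of_nonneg (ae_of_all μ fun θ => abs_nonneg (γ t θ - αd))
    (integrable_const _) (hγ.ae_mem.mono fun θ hθ => abs_le_sqrt (hγ.sq_sub_le ha hθ ht))
  simpa [hγ.measureReal_univ] using this

end IsAlignmentFlow

theorem stmt_8_general (αd αc : ℝ)
    (ρ a : ℝ) (hρ : 0 < ρ) (ha : 0 < a)
    (hcond : |αc| < π * (1 / a - 2))
    (f₀ : Measure ℝ)
    (hsupp : f₀ (Set.Ico (-π + αd) (π + αd))ᶜ = 0)
    (hmass : f₀ Set.univ = ENNReal.ofReal ρ)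
    (γ : ℝ → ℝ → ℝ)
    (hmeas : ∀ t, Measurable (γ t))
    (hval : ∀ θ ∈ Set.Ico (-π + αd) (π + αd), ∀ t, 0 ≤ t →
      γ t θ ∈ Set.Ico (-π + αd) (π + αd))
    -- the characteristic ODE of the mean-field model:
    (hode : ∀ θ ∈ Set.Ico (-π + αd) (π + αd), ∀ t, 0 ≤ t →
      HasDerivAt (fun s => γ s θ)
        (-ρ * (γ t θ - αd)
          + a * (γ t θ - αd + αc) * ∫ φ, Gfun |γ t θ - γ t φ| ∂f₀) t) :
    (∀ t, 0 ≤ t →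
      ∫ θ, |θ - αd| ∂(Measure.map (γ t) f₀) = ∫ θ, |γ t θ - αd| ∂f₀) ∧
    Tendsto (fun t => ∫ θ, |γ t θ - αd| ∂f₀) atTop (nhds 0) := by
  have : IsFiniteMeasure f₀ := ⟨by simp [hmass]⟩
  have hγ : IsAlignmentFlow ρ a αd αc f₀ γ :=
    { ae_mem := ae_iff.mpr hsupp
      measureReal_univ := by simp [measureReal_def, hmass, hρ.le]
      measurable := hmeas
      mapsTo := hval
      hasDerivAt := fun θ hθ t ht => (hode θ hθ t ht).sub_const αd }
  refine ⟨fun t _ => integral_map (hmeas t).aemeasurable (by fun_prop), ?_⟩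
  refine squeeze_zero' (.of_forall fun t => integral_nonneg fun θ => abs_nonneg _)
    ((eventually_ge_atTop 0).mono fun t ht => hγ.integral_abs_sub_le ha.le ht) ?_
  simpa using ((tendsto_add_mul_mul_exp_neg_atTop (alignmentRate_pos hρ ha hcond)
    (π ^ 2) (4 * a * ρ * π * (π + |αc|))).sqrt.const_mul ρ)

/-- If `|α_c| < π(1/a − 2)` then the solution `f(t) = γ_t # f₀` of the mean-field equation
aligns to the desired direction in first moment:
`∫_I |θ − α_d| f(t)(dθ) = ∫_I |γ_t(θ) − α_d| f₀(dθ) → 0` as `t → +∞`. -/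
theorem stmt_8 (αd αc : ℝ) (hαd : αd ∈ Set.Ico (-π) π) (hαc : αc ∈ Set.Ico (-π) π)
    (ρ a : ℝ) (hρ : 0 < ρ) (hρ1 : ρ ≤ 1) (ha : 0 < a) (ha1 : a ≤ 1)
    (hcond : |αc| < π * (1 / a - 2))
    (f₀ : Measure ℝ)
    (hsupp : f₀ (Set.Ico (-π + αd) (π + αd))ᶜ = 0)
    (hmass : f₀ Set.univ = ENNReal.ofReal ρ)
    (γ : ℝ → ℝ → ℝ)
    (hmeas : ∀ t, Measurable (γ t))
    (hval : ∀ θ ∈ Set.Ico (-π + αd) (π + αd), ∀ t, 0 ≤ t →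
      γ t θ ∈ Set.Ico (-π + αd) (π + αd))
    (hinit : ∀ θ ∈ Set.Ico (-π + αd) (π + αd), γ 0 θ = θ)
    -- the characteristic ODE of the mean-field model:
    (hode : ∀ θ ∈ Set.Ico (-π + αd) (π + αd), ∀ t, 0 ≤ t →
      HasDerivAt (fun s => γ s θ)
        (-ρ * (γ t θ - αd)
          + a * (γ t θ - αd + αc) * ∫ φ, Gfun |γ t θ - γ t φ| ∂f₀) t) :
    (∀ t, 0 ≤ t →
      ∫ θ, |θ - αd| ∂(Measure.map (γ t) f₀) = ∫ θ, |γ t θ - αd| ∂f₀) ∧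
    Tendsto (fun t => ∫ θ, |γ t θ - αd| ∂f₀) atTop (nhds 0) :=
  stmt_8_general αd αc ρ a hρ ha hcond f₀ hsupp hmass γ hmeas hval hode
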